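/- arXiv:1204.2609 — 2 statements merged into one kernel-verified Lean document; each statement's English description precedes it below -/
import Mathlib

section
/- (Theorem 2, semi-supervised PAC-Bayes bound). Let D be a probability measure on X × Y, let P be a (prior) probability measure on Θ, let δ ∈ (0,1], C > 0 and m ≥ 1. Then with probability at least 1 − δ over the draw of an i.i.d. sample S = ((x_1,y_1),…,(x_m,y_m)) ∼ D^{⊗m}, for every (posterior) probability measure Q on Θ that is absolutely continuous with respect to P and has finite KL(Q‖P), the true risk of the Gibbs classifier satisfies R(G_Q) ≤ (1/(1 − e^{−C})) · [1 − exp( −C·(e_S(G_Q) + (1/2)·d_S(G_Q)) − (1/m)·(KL(Q‖P) − ln δ) )]. -/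
open MeasureTheory

/-- The label space `Y = {-1, +1}` (as a measurable subtype of `ℤ`). -/
abbrev Label : Type := ({-1, 1} : Set ℤ)

/-- Kullback–Leibler divergence `KL(Q ‖ P) = ∫ log (dQ/dP) dQ`. -/
noncomputable def klDiv {Ω : Type*} [MeasurableSpace Ω] (Q P : Measure Ω) : ℝ :=
  ∫ ω, Real.log (Q.rnDeriv P ω).toReal ∂Q

/-!
Write `ℓ(θ, (x, y)) = 1[F θ x ≠ y]`. For binary labels
`1[a ≠ b] = 1[a ≠ y] + 1[b ≠ y] - 2 · 1[a ≠ y] · 1[b ≠ y]`, so averaging over `Q ⊗ Q` gives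
`e_S(G_Q) + d_S(G_Q) / 2 = R_S(G_Q)`, the empirical Gibbs risk, and the theorem becomes Catoni's
bound `R(G_Q) ≤ (1 - e^{-C})⁻¹ (1 - exp (-C R_S(G_Q) - (KL(Q‖P) - ln δ) / m))`.

For Catoni's bound let `Λ_θ` be the cumulant generating function of `ℓ(θ, ·)` under `D`. For fixed
`θ`, `exp (-C ∑ᵢ ℓ(θ, zᵢ) - m Λ_θ(-C))` has mean `1` under `D^{⊗m}`; by Fubini and Markov its
`P`-average is at most `1/δ` with probability `1 - δ`, and the Donsker–Varadhan inequality
transfers this to every posterior: `-C m R_S(G_Q) - m E_Q Λ_θ(-C) ≤ KL(Q‖P) - ln δ`. As `ℓ` is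
`{0,1}`-valued, `exp Λ_θ(-C) = 1 - (1 - e^{-C}) R(θ)`, so Jensen's inequality for `log` gives
`E_Q Λ_θ(-C) ≤ log (1 - (1 - e^{-C}) R(G_Q))`, and solving for `R(G_Q)` yields the bound.
-/

open ProbabilityTheory Real

lemma abs_le_one_of_eq_zero_or_eq_one {x : ℝ} (h : x = 0 ∨ x = 1) : |x| ≤ 1 := by
  rcases h with rfl | rfl <;> simp

lemma abs_mul_le_abs_mul_of_abs_le {x B : ℝ} (t : ℝ) (h : |x| ≤ B) : |t * x| ≤ |t| * B :=
  (abs_mul t x).trans_le (mul_le_mul_of_nonneg_left h (abs_nonneg t))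

section Integrability

variable {α : Type*} [MeasurableSpace α] {μ : Measure α} [IsFiniteMeasure μ] {f : α → ℝ} {B : ℝ}

lemma Measurable.integrable_of_abs_le (hf : Measurable f) (hB : ∀ x, |f x| ≤ B) :
    Integrable f μ :=
  .of_bound hf.aestronglyMeasurable B (ae_of_all _ hB)

lemma Measurable.integrable_exp_of_abs_le (hf : Measurable f) (hB : ∀ x, |f x| ≤ B) :
    Integrable (fun x => exp (f x)) μ :=
  hf.exp.integrable_of_abs_le fun x => by
    rw [abs_exp]
    exact exp_le_exp.2 ((le_abs_self _).trans (hB x))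

lemma Measurable.integrable_exp_mul_of_abs_le (hf : Measurable f) (hB : ∀ x, |f x| ≤ B)
    (t : ℝ) : Integrable (fun x => exp (t * f x)) μ :=
  (hf.const_mul t).integrable_exp_of_abs_le fun x => abs_mul_le_abs_mul_of_abs_le t (hB x)

end Integrability

lemma integral_le_klDiv_add_log_integral_exp {Θ : Type*} [MeasurableSpace Θ] {Q P : Measure Θ}
    [IsProbabilityMeasure Q] [IsProbabilityMeasure P] (hQP : Q ≪ P)
    (hKL : Integrable (llr Q P) Q) {f : Θ → ℝ} (hfQ : Integrable f Q)
    (hfP : Integrable (fun θ => exp (f θ)) P) :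
    ∫ θ, f θ ∂Q ≤ klDiv Q P + log (∫ θ, exp (f θ) ∂P) := by
  have := isProbabilityMeasure_tilted hfP
  -- Gibbs' inequality `0 ≤ KL(Q ‖ P.tilted f)`, with the tilted density expanded
  have hGibbs := InformationTheory.integral_llr_add_sub_measure_univ_nonneg
    (hQP.trans (absolutelyContinuous_tilted hfP)) (integrable_llr_tilted_right hQP hfQ hKL hfP)
  rw [integral_llr_tilted_right hQP hfQ hfP hKL] at hGibbs
  simp only [probReal_univ, add_sub_cancel_right] at hGibbs
  have hKL_eq : klDiv Q P = ∫ θ, llr Q P θ ∂Q := rfl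
  linarith

lemma integral_log_le_log_integral {α : Type*} [MeasurableSpace α] {μ : Measure α}
    [IsProbabilityMeasure μ] {f : α → ℝ} {ε : ℝ} (hε : 0 < ε) (hf : ∀ᵐ x ∂μ, ε ≤ f x)
    (hfi : Integrable f μ) (hlog : Integrable (fun x => log (f x)) μ) :
    ∫ x, log (f x) ∂μ ≤ log (∫ x, f x ∂μ) :=
  (strictConcaveOn_log_Ioi.concaveOn.subset (Set.Ici_subset_Ioi.2 hε)
    (convex_Ici ε)).le_map_integral (continuousOn_log.mono fun _ hx => (hε.trans_le hx).ne')
    isClosed_Ici hf hfi hlog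

lemma ofReal_one_sub_le_measure_le_inv {α : Type*} [MeasurableSpace α] {μ : Measure α}
    [IsProbabilityMeasure μ] {Z : α → ℝ} (hZ0 : 0 ≤ Z) (hZi : Integrable Z μ)
    (hZ1 : ∫ x, Z x ∂μ ≤ 1) {δ : ℝ} (hδ : 0 < δ) :
    ENNReal.ofReal (1 - δ) ≤ μ {x | Z x ≤ δ⁻¹} := by
  have hMarkov : μ {x | δ⁻¹ ≤ Z x} ≤ ENNReal.ofReal δ := by
    have := mul_meas_ge_le_integral_of_nonneg (ae_of_all _ hZ0) hZi δ⁻¹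
    rw [inv_mul_le_iff₀ hδ] at this
    rw [ENNReal.le_ofReal_iff_toReal_le (measure_ne_top _ _) hδ.le, ← measureReal_def]
    nlinarith
  have hcompl : {x | Z x ≤ δ⁻¹}ᶜ ⊆ {x | δ⁻¹ ≤ Z x} := fun x hx =>
    (not_le.1 (Set.notMem_ofPred_iff.1 hx)).le
  calc ENNReal.ofReal (1 - δ) = 1 - ENNReal.ofReal δ := by
        rw [← ENNReal.ofReal_one, ← ENNReal.ofReal_sub _ hδ.le]
    _ ≤ μ {x | Z x ≤ δ⁻¹} := by
      rw [tsub_le_iff_right, ← measure_univ (μ := μ)]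
      calc μ Set.univ ≤ μ {x | Z x ≤ δ⁻¹} + μ {x | Z x ≤ δ⁻¹}ᶜ := measure_univ_le_add_compl _
        _ ≤ μ {x | Z x ≤ δ⁻¹} + ENNReal.ofReal δ := by grw [measure_mono hcompl, hMarkov]

section ExponentialMoment

variable {Θ Z : Type*} [MeasurableSpace Θ] [MeasurableSpace Z] {D : Measure Z}
  [IsProbabilityMeasure D]

lemma mgf_sum_pi {ι : Type*} [Fintype ι] (X : Z → ℝ) (t : ℝ) :
    mgf (fun S : ι → Z => ∑ i, X (S i)) (Measure.pi fun _ => D) t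
      = mgf X D t ^ Fintype.card ι := by
  simp only [mgf, Finset.mul_sum, exp_sum]
  exact integral_fintype_prod_eq_pow (ι := ι) (μ := D) (fun z => exp (t * X z))

lemma integral_exp_mul_sum_sub_cgf {X : Z → ℝ} {t : ℝ}
    (hX : Integrable (fun z => exp (t * X z)) D) (m : ℕ) :
    ∫ S, exp (t * ∑ i, X (S i) - m * cgf X D t) ∂(Measure.pi fun _ : Fin m => D) = 1 := by
  simp_rw [sub_eq_add_neg, exp_add]
  rw [integral_mul_const]
  change mgf (fun S : Fin m → Z => ∑ i, X (S i)) _ t * _ = 1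
  rw [mgf_sum_pi, Fintype.card_fin, ← exp_cgf hX, ← exp_nat_mul, ← exp_add, add_neg_cancel,
    exp_zero]

lemma exp_neg_mul_le_mgf {X : Z → ℝ} {t B : ℝ} (hX : Integrable (fun z => exp (t * X z)) D)
    (hB : ∀ z, |X z| ≤ B) : exp (-(|t| * B)) ≤ mgf X D t := by
  calc exp (-(|t| * B)) = ∫ _, exp (-(|t| * B)) ∂D := by simp
    _ ≤ mgf X D t := integral_mono (integrable_const _) hX fun z =>
        exp_le_exp.2 (abs_le.1 (abs_mul_le_abs_mul_of_abs_le t (hB z))).1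

lemma mgf_le_exp_mul {X : Z → ℝ} {t B : ℝ} (hX : Integrable (fun z => exp (t * X z)) D)
    (hB : ∀ z, |X z| ≤ B) : mgf X D t ≤ exp (|t| * B) := by
  calc mgf X D t ≤ ∫ _, exp (|t| * B) ∂D := integral_mono hX (integrable_const _) fun z =>
        exp_le_exp.2 (abs_le.1 (abs_mul_le_abs_mul_of_abs_le t (hB z))).2
    _ = exp (|t| * B) := by simp

lemma abs_cgf_le {X : Z → ℝ} {t B : ℝ} (hX : Integrable (fun z => exp (t * X z)) D)
    (hB : ∀ z, |X z| ≤ B) : |cgf X D t| ≤ |t| * B := by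
  have hpos := (exp_pos _).trans_le (exp_neg_mul_le_mgf hX hB)
  rw [abs_le, cgf, le_log_iff_exp_le hpos, log_le_iff_le_exp hpos]
  exact ⟨exp_neg_mul_le_mgf hX hB, mgf_le_exp_mul hX hB⟩

lemma abs_mul_sum_sub_cgf_le {X : Z → ℝ} {t B : ℝ} (hX : Integrable (fun z => exp (t * X z)) D)
    (hB : ∀ z, |X z| ≤ B) {m : ℕ} (S : Fin m → Z) :
    |t * ∑ i, X (S i) - m * cgf X D t| ≤ 2 * m * (|t| * B) := by
  have hsum : |t * ∑ i, X (S i)| ≤ m * (|t| * B) := by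
    calc |t * ∑ i, X (S i)| ≤ |t| * ∑ _i : Fin m, B := abs_mul_le_abs_mul_of_abs_le t
          ((Finset.abs_sum_le_sum_abs _ _).trans (Finset.sum_le_sum fun i _ => hB _))
      _ = m * (|t| * B) := by
          simp only [Finset.sum_const, Finset.card_univ, Fintype.card_fin, nsmul_eq_mul]
          ring
  have hcgf : |m * cgf X D t| ≤ m * (|t| * B) := by
    rw [abs_mul, Nat.abs_cast]
    exact mul_le_mul_of_nonneg_left (abs_cgf_le hX hB) m.cast_nonneg
  linarith [abs_sub (t * ∑ i, X (S i)) (m * cgf X D t)]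

variable {X : Θ → Z → ℝ} {B : ℝ}

lemma measurable_mgf (hX : Measurable (Function.uncurry X)) (t : ℝ) :
    Measurable fun θ => mgf (X θ) D t := by
  have : Measurable fun p : Θ × Z => exp (t * X p.1 p.2) := by fun_prop
  exact this.stronglyMeasurable.integral_prod_right'.measurable

lemma measurable_cgf (hX : Measurable (Function.uncurry X)) (t : ℝ) :
    Measurable fun θ => cgf (X θ) D t :=
  (measurable_mgf hX t).log

lemma integrable_mgf (hX : Measurable (Function.uncurry X)) (hB : ∀ θ z, |X θ z| ≤ B)
    (Q : Measure Θ) [IsFiniteMeasure Q] (t : ℝ) : Integrable (fun θ => mgf (X θ) D t) Q :=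
  (measurable_mgf hX t).integrable_of_abs_le fun θ => by
    have hX' := hX.of_uncurry_left.integrable_exp_mul_of_abs_le (μ := D) (hB θ) t
    rw [abs_of_nonneg mgf_nonneg]
    exact mgf_le_exp_mul hX' (hB θ)

lemma integrable_cgf (hX : Measurable (Function.uncurry X)) (hB : ∀ θ z, |X θ z| ≤ B)
    (Q : Measure Θ) [IsFiniteMeasure Q] (t : ℝ) : Integrable (fun θ => cgf (X θ) D t) Q :=
  (measurable_cgf hX t).integrable_of_abs_le fun θ =>
    abs_cgf_le (hX.of_uncurry_left.integrable_exp_mul_of_abs_le (hB θ) t) (hB θ)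

lemma integral_cgf_le_log_integral_mgf (hX : Measurable (Function.uncurry X))
    (hB : ∀ θ z, |X θ z| ≤ B) (Q : Measure Θ) [IsProbabilityMeasure Q] (t : ℝ) :
    ∫ θ, cgf (X θ) D t ∂Q ≤ log (∫ θ, mgf (X θ) D t ∂Q) :=
  integral_log_le_log_integral (exp_pos (-(|t| * B))) (ae_of_all _ fun θ =>
      exp_neg_mul_le_mgf (hX.of_uncurry_left.integrable_exp_mul_of_abs_le (hB θ) t) (hB θ))
    (integrable_mgf hX hB Q t) (integrable_cgf hX hB Q t)

lemma integral_mgf_pos (hX : Measurable (Function.uncurry X)) (hB : ∀ θ z, |X θ z| ≤ B)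
    (Q : Measure Θ) [IsProbabilityMeasure Q] (t : ℝ) : 0 < ∫ θ, mgf (X θ) D t ∂Q := by
  have hle := integral_mono (integrable_const (exp (-(|t| * B)))) (integrable_mgf hX hB Q t)
    fun θ => exp_neg_mul_le_mgf (hX.of_uncurry_left.integrable_exp_mul_of_abs_le (μ := D) (hB θ) t)
      (hB θ)
  simp only [integral_const, probReal_univ, one_smul] at hle
  exact (exp_pos _).trans_le hle

theorem pacBayes_cgf_bound (hX : Measurable (Function.uncurry X)) (hB : ∀ θ z, |X θ z| ≤ B)
    (P : Measure Θ) [IsProbabilityMeasure P] (t : ℝ) (m : ℕ) {δ : ℝ} (hδ : 0 < δ) :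
    ENNReal.ofReal (1 - δ) ≤ Measure.pi (fun _ : Fin m => D)
      {S | ∀ Q : Measure Θ, IsProbabilityMeasure Q → Q ≪ P → Integrable (llr Q P) Q →
        ∫ θ, (t * ∑ i, X θ (S i) - m * cgf (X θ) D t) ∂Q ≤ klDiv Q P - log δ} := by
  set h : (Fin m → Z) × Θ → ℝ := fun p => t * ∑ i, X p.2 (p.1 i) - m * cgf (X p.2) D t
  have hXexp θ : Integrable (fun z => exp (t * X θ z)) D :=
    hX.of_uncurry_left.integrable_exp_mul_of_abs_le (hB θ) t
  have h_meas : Measurable h :=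
    ((Finset.measurable_sum _ fun i _ => hX.comp (measurable_snd.prodMk
      ((measurable_pi_apply i).comp measurable_fst))).const_mul t).sub
    (((measurable_cgf hX t).comp measurable_snd).const_mul _)
  have h_bdd p : |h p| ≤ 2 * m * (|t| * B) := abs_mul_sum_sub_cgf_le (hXexp p.2) (hB p.2) p.1
  have hexp_int : Integrable (fun p => exp (h p)) ((Measure.pi fun _ : Fin m => D).prod P) :=
    h_meas.integrable_exp_of_abs_le h_bdd
  have hmean : ∫ S, ∫ θ, exp (h (S, θ)) ∂P ∂(Measure.pi fun _ : Fin m => D) = 1 := by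
    rw [integral_integral_swap hexp_int]
    simp_rw [h, integral_exp_mul_sum_sub_cgf (hXexp _)]
    simp
  refine (ofReal_one_sub_le_measure_le_inv (fun S => integral_nonneg fun θ => (exp_pos _).le)
    hexp_int.integral_prod_left hmean.le hδ).trans (measure_mono fun S hS Q _ hQP hKL => ?_)
  have hS_meas : Measurable fun θ => h (S, θ) := by fun_prop
  have hS_exp : Integrable (fun θ => exp (h (S, θ))) P :=
    hS_meas.integrable_exp_of_abs_le fun θ => h_bdd _
  calc ∫ θ, h (S, θ) ∂Q ≤ klDiv Q P + log (∫ θ, exp (h (S, θ)) ∂P) :=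
        integral_le_klDiv_add_log_integral_exp hQP hKL
          (hS_meas.integrable_of_abs_le fun θ => h_bdd _) hS_exp
    _ ≤ klDiv Q P + log δ⁻¹ := by gcongr; exacts [integral_exp_pos hS_exp, hS]
    _ = klDiv Q P - log δ := by rw [log_inv, sub_eq_add_neg]

end ExponentialMoment

section Catoni

variable {Θ Z : Type*} [MeasurableSpace Θ] [MeasurableSpace Z] {D : Measure Z}
  [IsProbabilityMeasure D] {ℓ : Θ → Z → ℝ}

lemma mgf_of_zero_one {X : Z → ℝ} (hX : Integrable X D) (h01 : ∀ z, X z = 0 ∨ X z = 1)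
    (t : ℝ) : mgf X D t = 1 - (1 - exp t) * ∫ z, X z ∂D := by
  have hlin z : exp (t * X z) = 1 - (1 - exp t) * X z := by
    rcases h01 z with h | h <;> simp [h]
  simp_rw [mgf, hlin]
  rw [integral_sub (integrable_const _) (hX.const_mul _), integral_const_mul]
  simp

lemma integral_mgf_of_zero_one (hℓ : Measurable (Function.uncurry ℓ))
    (hℓ01 : ∀ θ z, ℓ θ z = 0 ∨ ℓ θ z = 1) (Q : Measure Θ) [IsProbabilityMeasure Q] (t : ℝ) :
    ∫ θ, mgf (ℓ θ) D t ∂Q = 1 - (1 - exp t) * ∫ θ, ∫ z, ℓ θ z ∂D ∂Q := by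
  have hℓ1 := fun θ z => abs_le_one_of_eq_zero_or_eq_one (hℓ01 θ z)
  have hrisk : Integrable (fun θ => ∫ z, ℓ θ z ∂D) Q :=
    hℓ.stronglyMeasurable.integral_prod_right'.measurable.integrable_of_abs_le fun θ => by
      simpa using norm_integral_le_of_norm_le_const (μ := D)
        (ae_of_all _ fun z => (Real.norm_eq_abs _).trans_le (hℓ1 θ z))
  have hmgf θ := mgf_of_zero_one (hℓ.of_uncurry_left.integrable_of_abs_le (μ := D) (hℓ1 θ))
    (hℓ01 θ) t
  simp_rw [hmgf]
  rw [integral_sub (integrable_const _) (hrisk.const_mul _), integral_const_mul]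
  simp

lemma le_one_div_mul_one_sub_exp_of_neg_mul_log_le {c r m B : ℝ} (hc : 0 < c) (hm : 0 < m)
    (hr : 0 < 1 - c * r) (h : -(m * log (1 - c * r)) ≤ B) :
    r ≤ 1 / c * (1 - exp (-(B / m))) := by
  have hlog : -(B / m) ≤ log (1 - c * r) := by
    rw [neg_le, le_div_iff₀ hm]
    linarith
  have hexp : exp (-(B / m)) ≤ 1 - c * r := (exp_le_exp.2 hlog).trans_eq (exp_log hr)
  rw [one_div, ← div_eq_inv_mul, le_div_iff₀ hc]
  linarith

lemma integral_integral_le_of_integral_cgf_le (hℓ : Measurable (Function.uncurry ℓ))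
    (hℓ01 : ∀ θ z, ℓ θ z = 0 ∨ ℓ θ z = 1) (Q : Measure Θ) [IsProbabilityMeasure Q]
    {C : ℝ} (hC : 0 < C) {m : ℕ} (hm : 0 < m) (S : Fin m → Z) {K : ℝ}
    (hK : ∫ θ, (-C * ∑ i, ℓ θ (S i) - m * cgf (ℓ θ) D (-C)) ∂Q ≤ K) :
    ∫ θ, ∫ z, ℓ θ z ∂D ∂Q ≤ 1 / (1 - exp (-C)) *
      (1 - exp (-C * ∫ θ, (m : ℝ)⁻¹ * ∑ i, ℓ θ (S i) ∂Q - 1 / (m : ℝ) * K)) := by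
  have hℓ1 := fun θ z => abs_le_one_of_eq_zero_or_eq_one (hℓ01 θ z)
  have hmean := integral_mgf_of_zero_one (D := D) hℓ hℓ01 Q (-C)
  have hJensen := integral_cgf_le_log_integral_mgf (D := D) hℓ hℓ1 Q (-C)
  have hpos := integral_mgf_pos (D := D) hℓ hℓ1 Q (-C)
  rw [hmean] at hJensen hpos
  have hsum : Integrable (fun θ => ∑ i, ℓ θ (S i)) Q :=
    integrable_finsetSum _ fun i _ => hℓ.of_uncurry_right.integrable_of_abs_le (hℓ1 · _)
  rw [integral_sub (hsum.const_mul _) ((integrable_cgf hℓ hℓ1 Q _).const_mul _),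
    integral_const_mul, integral_const_mul] at hK
  have hm' : (0 : ℝ) < m := Nat.cast_pos.2 hm
  convert le_one_div_mul_one_sub_exp_of_neg_mul_log_le (sub_pos.2 (exp_lt_one_iff.2
    (neg_lt_zero.2 hC))) hm' hpos (B := C * ∫ θ, ∑ i, ℓ θ (S i) ∂Q + K) ?_ using 4
  · rw [integral_const_mul]
    field_simp
    ring
  · nlinarith

theorem catoni_bound (hℓ : Measurable (Function.uncurry ℓ))
    (hℓ01 : ∀ θ z, ℓ θ z = 0 ∨ ℓ θ z = 1) (P : Measure Θ) [IsProbabilityMeasure P]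
    {C : ℝ} (hC : 0 < C) {m : ℕ} (hm : 0 < m) {δ : ℝ} (hδ : 0 < δ) :
    ENNReal.ofReal (1 - δ) ≤ Measure.pi (fun _ : Fin m => D)
      {S | ∀ Q : Measure Θ, IsProbabilityMeasure Q → Q ≪ P → Integrable (llr Q P) Q →
        ∫ θ, ∫ z, ℓ θ z ∂D ∂Q ≤ 1 / (1 - exp (-C)) *
          (1 - exp (-C * ∫ θ, (m : ℝ)⁻¹ * ∑ i, ℓ θ (S i) ∂Q
            - 1 / (m : ℝ) * (klDiv Q P - log δ)))} :=
  (pacBayes_cgf_bound hℓ (fun θ z => abs_le_one_of_eq_zero_or_eq_one (hℓ01 θ z)) P (-C) m hδ).trans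
    (measure_mono fun S hS Q _ hQP hKL =>
      integral_integral_le_of_integral_cgf_le hℓ hℓ01 Q hC hm S (hS Q ‹_› hQP hKL))

end Catoni

lemma Label.eq_of_ne_of_ne {a b y : Label} (ha : a ≠ y) (hb : b ≠ y) : a = b := by
  obtain ⟨a, rfl | rfl⟩ := a <;> obtain ⟨b, rfl | rfl⟩ := b <;> obtain ⟨y, rfl | rfl⟩ := y <;>
    simp_all

lemma ite_ne_mul_ite_ne_add_half_ite_ne (a b y : Label) :
    (if a ≠ y then (1 : ℝ) else 0) * (if b ≠ y then 1 else 0) + 1 / 2 * (if a ≠ b then 1 else 0)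
      = ((if a ≠ y then 1 else 0) + (if b ≠ y then 1 else 0)) / 2 := by
  by_cases ha : a = y <;> by_cases hb : b = y
  · simp [ha, hb]
  · simp [ha, Ne.symm hb, hb]
  · simp [ha, hb]
  · simp [hb, Label.eq_of_ne_of_ne ha hb]

lemma integral_integral_add_mul_integral_integral {Θ : Type*} [MeasurableSpace Θ] {Q : Measure Θ}
    [IsProbabilityMeasure Q] {f g : Θ → Θ → ℝ} {r : Θ → ℝ}
    (hf : Integrable (Function.uncurry f) (Q.prod Q))
    (hg : Integrable (Function.uncurry g) (Q.prod Q))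
    (hr : Integrable r Q) {c : ℝ} (hfg : ∀ θ₁ θ₂, f θ₁ θ₂ + c * g θ₁ θ₂ = (r θ₁ + r θ₂) / 2) :
    ∫ θ₁, ∫ θ₂, f θ₁ θ₂ ∂Q ∂Q + c * ∫ θ₁, ∫ θ₂, g θ₁ θ₂ ∂Q ∂Q = ∫ θ, r θ ∂Q := by
  calc _ = ∫ z, (f z.1 z.2 + c * g z.1 z.2) ∂Q.prod Q := by
        rw [integral_integral hf, integral_integral hg, ← integral_const_mul]
        exact (integral_add hf (hg.const_mul c)).symm
    _ = ∫ z, (r z.1 + r z.2) / 2 ∂Q.prod Q := by simp_rw [hfg]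
    _ = ∫ θ, r θ ∂Q := by
        rw [integral_div, integral_add (hr.comp_fst Q) (hr.comp_snd Q), integral_fun_fst,
          integral_fun_snd]
        simp

lemma measurable_ite_ne_one_zero {α β : Type*} [MeasurableSpace α] [MeasurableSpace β]
    [MeasurableEq β] [DecidableEq β] {f g : α → β} (hf : Measurable f) (hg : Measurable g) :
    Measurable fun a => if f a ≠ g a then (1 : ℝ) else 0 :=
  Measurable.ite (measurableSet_eq_fun hf hg).compl measurable_const measurable_const

lemma abs_ite_one_zero_le (p : Prop) [Decidable p] : |if p then (1 : ℝ) else 0| ≤ 1 :=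
  abs_le_one_of_eq_zero_or_eq_one (by split_ifs <;> simp)

lemma integral_integral_joint_error_add_half_disagreement {X Θ : Type*} [MeasurableSpace X]
    [MeasurableSpace Θ] (F : Θ → X → Label) (hF : Measurable fun p : Θ × X => F p.1 p.2)
    (Q : Measure Θ) [IsProbabilityMeasure Q] {m : ℕ} (S : Fin m → X × Label) :
    (∫ θ₁, ∫ θ₂, (m : ℝ)⁻¹ * ∑ i : Fin m,
        (if F θ₁ (S i).1 ≠ (S i).2 then (1 : ℝ) else 0) *
        (if F θ₂ (S i).1 ≠ (S i).2 then (1 : ℝ) else 0) ∂Q ∂Q)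
      + (1 / 2) * (∫ θ₁, ∫ θ₂, (m : ℝ)⁻¹ * ∑ i : Fin m,
        (if F θ₁ (S i).1 ≠ F θ₂ (S i).1 then (1 : ℝ) else 0) ∂Q ∂Q)
    = ∫ θ, (m : ℝ)⁻¹ * ∑ i, (if F θ (S i).1 ≠ (S i).2 then (1 : ℝ) else 0) ∂Q := by
  have hFx x : Measurable fun θ => F θ x := hF.comp (measurable_id.prodMk measurable_const)
  have herr x y : Measurable fun θ => if F θ x ≠ y then (1 : ℝ) else 0 :=
    measurable_ite_ne_one_zero (hFx x) measurable_const
  have hjoint : Integrable (fun p : Θ × Θ => (m : ℝ)⁻¹ * ∑ i : Fin m,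
      (if F p.1 (S i).1 ≠ (S i).2 then (1 : ℝ) else 0) *
      (if F p.2 (S i).1 ≠ (S i).2 then (1 : ℝ) else 0)) (Q.prod Q) := by
    refine (integrable_finsetSum _ fun i _ => Measurable.integrable_of_abs_le
      (((herr _ _).comp measurable_fst).mul ((herr _ _).comp measurable_snd)) (B := 1)
      fun p => ?_).const_mul _
    rw [Pi.mul_apply, abs_mul]
    exact mul_le_one₀ (abs_ite_one_zero_le _) (abs_nonneg _) (abs_ite_one_zero_le _)
  have hdis : Integrable (fun p : Θ × Θ => (m : ℝ)⁻¹ * ∑ i : Fin m,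
      (if F p.1 (S i).1 ≠ F p.2 (S i).1 then (1 : ℝ) else 0)) (Q.prod Q) :=
    (integrable_finsetSum _ fun i _ => Measurable.integrable_of_abs_le
      (measurable_ite_ne_one_zero ((hFx _).comp measurable_fst) ((hFx _).comp measurable_snd))
      fun p => abs_ite_one_zero_le _).const_mul _
  have hemp : Integrable (fun θ => (m : ℝ)⁻¹ * ∑ i : Fin m,
      (if F θ (S i).1 ≠ (S i).2 then (1 : ℝ) else 0)) Q :=
    (integrable_finsetSum _ fun i _ => (herr _ _).integrable_of_abs_le
      fun θ => abs_ite_one_zero_le _).const_mul _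
  refine integral_integral_add_mul_integral_integral hjoint hdis hemp fun θ₁ θ₂ => ?_
  simp only [Finset.mul_sum, ← Finset.sum_add_distrib, Finset.sum_div]
  refine Finset.sum_congr rfl fun i _ => ?_
  linear_combination
    (m : ℝ)⁻¹ * ite_ne_mul_ite_ne_add_half_ite_ne (F θ₁ (S i).1) (F θ₂ (S i).1) (S i).2

theorem pac_bayes_semi_supervised_general
    {X Θ : Type*} [MeasurableSpace X] [MeasurableSpace Θ]
    (F : Θ → X → Label) (hF : Measurable fun p : Θ × X => F p.1 p.2)
    (D : Measure (X × Label)) [IsProbabilityMeasure D]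
    (P : Measure Θ) [IsProbabilityMeasure P]
    (δ : ℝ) (hδ0 : 0 < δ)
    (C : ℝ) (hC : 0 < C)
    (m : ℕ) (hm : 1 ≤ m) :
    ENNReal.ofReal (1 - δ) ≤
      (Measure.pi fun _ : Fin m => D)
        {S : Fin m → X × Label |
          ∀ Q : Measure Θ, IsProbabilityMeasure Q → Q ≪ P →
            Integrable (fun θ => Real.log (Q.rnDeriv P θ).toReal) Q →
            (∫ θ, ∫ p, (if F θ p.1 ≠ p.2 then (1 : ℝ) else 0) ∂D ∂Q) ≤
              (1 / (1 - Real.exp (-C))) *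
                (1 - Real.exp
                  (-C *
                    ((∫ θ₁, ∫ θ₂, (m : ℝ)⁻¹ *
                        ∑ i : Fin m,
                          (if F θ₁ (S i).1 ≠ (S i).2 then (1 : ℝ) else 0) *
                          (if F θ₂ (S i).1 ≠ (S i).2 then (1 : ℝ) else 0) ∂Q ∂Q)
                     + (1 / 2) *
                       (∫ θ₁, ∫ θ₂, (m : ℝ)⁻¹ *
                          ∑ i : Fin m,
                            (if F θ₁ (S i).1 ≠ F θ₂ (S i).1 then (1 : ℝ) else 0) ∂Q ∂Q))
                   - (1 / (m : ℝ)) * (klDiv Q P - Real.log δ)))} := by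
  have herr : Measurable fun p : Θ × (X × Label) => if F p.1 p.2.1 ≠ p.2.2 then (1 : ℝ) else 0 :=
    measurable_ite_ne_one_zero (hF.comp (measurable_fst.prodMk measurable_snd.fst))
      measurable_snd.snd
  have herr01 θ (z : X × Label) : (if F θ z.1 ≠ z.2 then (1 : ℝ) else 0) = 0 ∨
      (if F θ z.1 ≠ z.2 then (1 : ℝ) else 0) = 1 := by
    split_ifs <;> simp
  refine (catoni_bound (ℓ := fun θ z => if F θ z.1 ≠ z.2 then (1 : ℝ) else 0) herr herr01 P hC hm
    hδ0).trans (measure_mono fun S hS Q hQ hQP hKL => ?_)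
  rw [integral_integral_joint_error_add_half_disagreement F hF Q S]
  exact hS Q hQ hQP hKL

/-- **Theorem 2 (semi-supervised PAC-Bayes bound).**
With probability at least `1 - δ` over the draw of an i.i.d. sample `S ∼ D^{⊗m}`,
every posterior `Q ≪ P` with finite `KL(Q‖P)` satisfies
`R(G_Q) ≤ (1/(1 - e^{-C})) (1 - exp(-C (e_S(G_Q) + d_S(G_Q)/2) - (1/m)(KL(Q‖P) - ln δ)))`,
where `e_S` is the joint (agreement) error and `d_S` the disagreement over two
independent draws `(θ₁, θ₂) ∼ Q ⊗ Q`. -/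
theorem pac_bayes_semi_supervised
    {X Θ : Type*} [MeasurableSpace X] [MeasurableSpace Θ]
    (F : Θ → X → Label) (hF : Measurable fun p : Θ × X => F p.1 p.2)
    (D : Measure (X × Label)) [IsProbabilityMeasure D]
    (P : Measure Θ) [IsProbabilityMeasure P]
    (δ : ℝ) (hδ0 : 0 < δ) (hδ1 : δ ≤ 1)
    (C : ℝ) (hC : 0 < C)
    (m : ℕ) (hm : 1 ≤ m) :
    ENNReal.ofReal (1 - δ) ≤
      (Measure.pi fun _ : Fin m => D)
        {S : Fin m → X × Label |
          ∀ Q : Measure Θ, IsProbabilityMeasure Q → Q ≪ P →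
            Integrable (fun θ => Real.log (Q.rnDeriv P θ).toReal) Q →
            (∫ θ, ∫ p, (if F θ p.1 ≠ p.2 then (1 : ℝ) else 0) ∂D ∂Q) ≤
              (1 / (1 - Real.exp (-C))) *
                (1 - Real.exp
                  (-C *
                    ((∫ θ₁, ∫ θ₂, (m : ℝ)⁻¹ *
                        ∑ i : Fin m,
                          (if F θ₁ (S i).1 ≠ (S i).2 then (1 : ℝ) else 0) *
                          (if F θ₂ (S i).1 ≠ (S i).2 then (1 : ℝ) else 0) ∂Q ∂Q)
                     + (1 / 2) *
                       (∫ θ₁, ∫ θ₂, (m : ℝ)⁻¹ *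
                          ∑ i : Fin m,
                            (if F θ₁ (S i).1 ≠ F θ₂ (S i).1 then (1 : ℝ) else 0) ∂Q ∂Q))
                   - (1 / (m : ℝ)) * (klDiv Q P - Real.log δ)))} :=
  pac_bayes_semi_supervised_general F hF D P δ hδ0 C hC m hm
end

section
/- (Disagreement probability of two independent Gaussian linear classifiers, Eq. (13)). Let d ≥ 1, u ∈ ℝ^d, and φ ∈ ℝ^d with φ ≠ 0. Let w1 and w2 be independent, each distributed according to N(u, I) = ⊗_{i=1}^d gaussianReal(u_i, 1) on ℝ^d. Then the probability that sign(⟨w1, φ⟩) ≠ sign(⟨w2, φ⟩) equals 2·Φ( ⟨u, φ⟩/‖φ‖ )·Φ( −⟨u, φ⟩/‖φ‖ ), where sign(a) = +1 if a > 0 and sign(a) = −1 otherwise. -/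
/-!
The linear statistic `⟨w, φ⟩` of `w ∼ N(u, I)` has law `N(⟨u, φ⟩, ‖φ‖²)`, since characteristic
functions multiply over the independent coordinates. Standardizing, a single classifier outputs `+1`
with probability `Φ(-⟨u, φ⟩/‖φ‖)` and `-1` with probability `Φ(⟨u, φ⟩/‖φ‖)`, and by independence two
of them disagree with probability twice the product.
-/

open MeasureTheory ProbabilityTheory

/-- `sign(a) = +1` if `a > 0` and `sign(a) = -1` otherwise. -/
noncomputable def sgn (a : ℝ) : ℤ := if 0 < a then 1 else -1

/-- Standard Gaussian upper tail `Φ(a) = ∫_a^∞ (1/√(2π)) e^{-x²/2} dx`. -/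
noncomputable def gaussTail (a : ℝ) : ℝ :=
  ∫ x in Set.Ioi a, (Real.sqrt (2 * Real.pi))⁻¹ * Real.exp (-x ^ 2 / 2)

open Set
open scoped NNReal ENNReal

section Pi

variable {ι : Type*} [Fintype ι]

lemma map_sum_pi_gaussianReal (m : ι → ℝ) (v : ι → ℝ≥0) :
    (Measure.pi fun i ↦ gaussianReal (m i) (v i)).map (fun w ↦ ∑ i, w i) =
      gaussianReal (∑ i, m i) (∑ i, v i) := by
  refine Measure.ext_of_charFun (funext fun t ↦ ?_)
  rw [charFun_map_sum_pi_eq_prod, Finset.prod_apply]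
  simp_rw [charFun_gaussianReal, ← Complex.exp_sum]
  push_cast
  simp only [Finset.mul_sum, Finset.sum_mul, Finset.sum_div, ← Finset.sum_sub_distrib]

lemma map_pi_gaussianReal_sum_mul (m : ι → ℝ) (v : ι → ℝ≥0) (c : ι → ℝ) :
    (Measure.pi fun i ↦ gaussianReal (m i) (v i)).map (fun w ↦ ∑ i, w i * c i) =
      gaussianReal (∑ i, m i * c i) (∑ i, .mk (c i ^ 2) (sq_nonneg _) * v i) := by
  have hcomp : (fun w : ι → ℝ ↦ ∑ i, w i * c i) = (fun w ↦ ∑ i, w i) ∘ (fun w i ↦ w i * c i) :=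
    rfl
  rw [hcomp, ← Measure.map_map (by fun_prop) (by fun_prop),
    Measure.pi_map_pi (f := fun i x ↦ x * c i) fun i ↦ by fun_prop]
  simp_rw [gaussianReal_map_mul_const, mul_comm (c _) (m _)]
  exact map_sum_pi_gaussianReal _ _

end Pi

lemma gaussianReal_eq_map_const_add_sqrt_mul (m : ℝ) (v : ℝ≥0) :
    gaussianReal m v = (gaussianReal 0 1).map (fun x ↦ m + √(v : ℝ) * x) := by
  have hcomp : (fun x ↦ m + √(v : ℝ) * x) = (m + ·) ∘ (√(v : ℝ) * ·) := rfl
  rw [hcomp, ← Measure.map_map (by fun_prop) (by fun_prop), gaussianReal_map_const_mul,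
    gaussianReal_map_const_add]
  congr 1
  · ring
  · ext
    simp

lemma gaussianReal_zero_one_Ioi (a : ℝ) :
    gaussianReal 0 1 (Ioi a) = ENNReal.ofReal (gaussTail a) := by
  rw [gaussianReal_apply_eq_integral 0 one_ne_zero, gaussTail]
  congr 1
  refine setIntegral_congr_fun measurableSet_Ioi fun x _ ↦ ?_
  simp [gaussianPDFReal]

lemma gaussianReal_Ioi_zero (m : ℝ) {v : ℝ≥0} (hv : v ≠ 0) :
    gaussianReal m v (Ioi 0) = ENNReal.ofReal (gaussTail (-(m / √(v : ℝ)))) := by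
  have hσ : 0 < √(v : ℝ) := Real.sqrt_pos.2 (by positivity)
  have hpre : (fun x ↦ m + √(v : ℝ) * x) ⁻¹' Ioi 0 = Ioi (-(m / √(v : ℝ))) := by
    ext x
    simp only [mem_preimage, mem_Ioi, neg_lt_iff_pos_add', div_add' _ _ _ hσ.ne',
      div_pos_iff_of_pos_right hσ]
    rw [mul_comm]
  rw [gaussianReal_eq_map_const_add_sqrt_mul, Measure.map_apply (by fun_prop) measurableSet_Ioi,
    hpre, gaussianReal_zero_one_Ioi]

lemma gaussianReal_Iic_zero (m : ℝ) {v : ℝ≥0} (hv : v ≠ 0) :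
    gaussianReal m v (Iic 0) = ENNReal.ofReal (gaussTail (m / √(v : ℝ))) := by
  have := nullSingletonClass_gaussianReal (μ := -m) hv
  have hneg : (fun x : ℝ ↦ -x) ⁻¹' Ici 0 = Iic 0 := by ext; simp
  rw [← hneg, ← Measure.map_apply (by fun_prop) measurableSet_Ici, gaussianReal_map_neg,
    measure_congr Ioi_ae_eq_Ici.symm, gaussianReal_Ioi_zero _ hv, neg_div, neg_neg]

lemma gaussTail_nonneg (a : ℝ) : 0 ≤ gaussTail a :=
  setIntegral_nonneg measurableSet_Ioi fun _ _ ↦ by positivity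

lemma setOf_sgn_ne_sgn :
    {p : ℝ × ℝ | sgn p.1 ≠ sgn p.2} = Ioi 0 ×ˢ Iic 0 ∪ Iic 0 ×ˢ Ioi 0 := by
  ext ⟨x, y⟩
  by_cases hx : 0 < x <;> by_cases hy : 0 < y <;> simp [sgn, hx, hy] <;> linarith

lemma measurableSet_setOf_sgn_ne_sgn : MeasurableSet {p : ℝ × ℝ | sgn p.1 ≠ sgn p.2} := by
  rw [setOf_sgn_ne_sgn]
  exact (measurableSet_Ioi.prod measurableSet_Iic).union (measurableSet_Iic.prod measurableSet_Ioi)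

lemma prod_self_setOf_sgn_ne_sgn (ν : Measure ℝ) [SFinite ν] :
    ν.prod ν {p | sgn p.1 ≠ sgn p.2} = 2 * ν (Ioi 0) * ν (Iic 0) := by
  have hdisj : Disjoint (Ioi (0 : ℝ) ×ˢ Iic (0 : ℝ)) (Iic 0 ×ˢ Ioi 0) :=
    disjoint_prod.2 (Or.inl (Iic_disjoint_Ioi le_rfl).symm)
  rw [setOf_sgn_ne_sgn, measure_union hdisj (measurableSet_Iic.prod measurableSet_Ioi),
    Measure.prod_prod, Measure.prod_prod]
  ring

theorem gaussian_linear_classifiers_disagreement_general (d : ℕ)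
    (u φ : Fin d → ℝ) (hφ : φ ≠ 0) :
    (((Measure.pi fun i : Fin d => gaussianReal (u i) 1).prod
        (Measure.pi fun i : Fin d => gaussianReal (u i) 1))
        {w : (Fin d → ℝ) × (Fin d → ℝ) |
          sgn (∑ i, w.1 i * φ i) ≠ sgn (∑ i, w.2 i * φ i)}).toReal =
      2 * gaussTail ((∑ i, u i * φ i) / Real.sqrt (∑ i, φ i ^ 2)) *
        gaussTail (-((∑ i, u i * φ i) / Real.sqrt (∑ i, φ i ^ 2))) := by
  set f : (Fin d → ℝ) → ℝ := fun w ↦ ∑ i, w i * φ i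
  set V : ℝ≥0 := ∑ i, .mk (φ i ^ 2) (sq_nonneg _) * 1
  have hV : (V : ℝ) = ∑ i, φ i ^ 2 := by simp [V]
  have hV0 : V ≠ 0 := by
    obtain ⟨i, hi⟩ := Function.ne_iff.1 hφ
    rw [← NNReal.coe_ne_zero, hV]
    exact (Finset.sum_pos' (fun j _ ↦ sq_nonneg (φ j))
      ⟨i, Finset.mem_univ i, pow_two_pos_of_ne_zero hi⟩).ne'
  have hf : Measurable f := by fun_prop
  rw [show {w : (Fin d → ℝ) × (Fin d → ℝ) | sgn (f w.1) ≠ sgn (f w.2)} =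
      Prod.map f f ⁻¹' {p : ℝ × ℝ | sgn p.1 ≠ sgn p.2} from rfl,
    ← Measure.map_apply (hf.prodMap hf) measurableSet_setOf_sgn_ne_sgn,
    ← Measure.map_prod_map _ _ hf hf,
    map_pi_gaussianReal_sum_mul, prod_self_setOf_sgn_ne_sgn, gaussianReal_Ioi_zero _ hV0,
    gaussianReal_Iic_zero _ hV0, hV]
  simp only [ENNReal.toReal_mul, ENNReal.toReal_ofNat, ENNReal.toReal_ofReal (gaussTail_nonneg _)]
  ring

/-- **Disagreement probability of two independent Gaussian linear classifiers (Eq. (13)).**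
For independent `w₁, w₂ ∼ N(u, I)`,
`Pr[sign(⟨w₁, φ⟩) ≠ sign(⟨w₂, φ⟩)] = 2 Φ(⟨u,φ⟩/‖φ‖) Φ(-⟨u,φ⟩/‖φ‖)`. -/
theorem gaussian_linear_classifiers_disagreement (d : ℕ) (hd : 1 ≤ d)
    (u φ : Fin d → ℝ) (hφ : φ ≠ 0) :
    (((Measure.pi fun i : Fin d => gaussianReal (u i) 1).prod
        (Measure.pi fun i : Fin d => gaussianReal (u i) 1))
        {w : (Fin d → ℝ) × (Fin d → ℝ) |
          sgn (∑ i, w.1 i * φ i) ≠ sgn (∑ i, w.2 i * φ i)}).toReal =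
      2 * gaussTail ((∑ i, u i * φ i) / Real.sqrt (∑ i, φ i ^ 2)) *
        gaussTail (-((∑ i, u i * φ i) / Real.sqrt (∑ i, φ i ^ 2))) :=
  gaussian_linear_classifiers_disagreement_general d u φ hφ
end
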